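/- arXiv:2101.01938 — 6 statements merged into one kernel-verified Lean document; each statement's English description precedes it below -/
import Mathlib

section
/- In an n-inner product space H, the Cauchy–Schwarz inequality holds: for all x, y, x₂, …, xₙ in H, |⟨x, y | x₂, …, xₙ⟩| ≤ ‖x, x₂, …, xₙ‖ · ‖y, x₂, …, xₙ‖, where ‖x₁, x₂, …, xₙ‖ = √⟨x₁, x₁ | x₂, …, xₙ⟩. -/
open RCLike

/-- An `n`-inner product (with `n = m + 1`) on a vector space `H` over `𝕜`:
a function `⟨x, y | x₂, …, xₙ⟩` of a pair of vectors and `m` further vectors,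
satisfying the five axioms of Misiak. -/
structure NInnerProductSpace (𝕜 : Type*) [RCLike 𝕜] (m : ℕ) (H : Type*)
    [AddCommGroup H] [Module 𝕜 H] where
  ip : H → H → (Fin m → H) → 𝕜
  nonneg : ∀ (x : H) (rest : Fin m → H), 0 ≤ re (ip x x rest)
  conj_symm : ∀ (x y : H) (rest : Fin m → H), ip x y rest = starRingEnd 𝕜 (ip y x rest)
  degenerate_iff : ∀ (x : H) (rest : Fin m → H),
    ip x x rest = 0 ↔ ¬ LinearIndependent 𝕜 (Fin.cons x rest : Fin (m + 1) → H)
  perm_invariant : ∀ (x y : H) (rest : Fin m → H) (σ : Equiv.Perm (Fin m)),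
    ip x y (rest ∘ σ) = ip x y rest
  smul_left : ∀ (a : 𝕜) (x y : H) (rest : Fin m → H),
    ip (a • x) y rest = a * ip x y rest
  add_left : ∀ (x x' y : H) (rest : Fin m → H),
    ip (x + x') y rest = ip x y rest + ip x' y rest

/-- The induced `n`-norm `‖x₁, …, xₙ‖ = √⟨x₁, x₁ | x₂, …, xₙ⟩` of an `n`-tuple. -/
noncomputable def NInnerProductSpace.nnorm {𝕜 : Type*} [RCLike 𝕜] {m : ℕ} {H : Type*}
    [AddCommGroup H] [Module 𝕜 H] (S : NInnerProductSpace 𝕜 m H)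
    (t : Fin (m + 1) → H) : ℝ :=
  Real.sqrt (re (S.ip (t 0) (t 0) (Fin.tail t)))


section CS
variable {𝕜 : Type*} [RCLike 𝕜] {m : ℕ} {H : Type*} [AddCommGroup H] [Module 𝕜 H]

lemma NIP.smul_right (S : NInnerProductSpace 𝕜 m H) (a : 𝕜) (x y : H) (rest : Fin m → H) :
    S.ip x (a • y) rest = starRingEnd 𝕜 a * S.ip x y rest := by
  rw [S.conj_symm, S.smul_left, map_mul, ← S.conj_symm]

lemma NIP.add_right (S : NInnerProductSpace 𝕜 m H) (x y y' : H) (rest : Fin m → H) :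
    S.ip x (y + y') rest = S.ip x y rest + S.ip x y' rest := by
  rw [S.conj_symm, S.add_left, map_add, ← S.conj_symm, ← S.conj_symm]

lemma NIP.expand (S : NInnerProductSpace 𝕜 m H) (s : 𝕜) (x y : H) (rest : Fin m → H) :
    S.ip (x + s • y) (x + s • y) rest =
      S.ip x x rest + starRingEnd 𝕜 s * S.ip x y rest
        + s * starRingEnd 𝕜 (S.ip x y rest) + s * starRingEnd 𝕜 s * S.ip y y rest := by
  rw [S.add_left, NIP.add_right, NIP.add_right, S.smul_left, NIP.smul_right,
    NIP.smul_right, S.smul_left, ← S.conj_symm]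
  ring

end CS

/-- the Cauchy–Schwarz inequality in an `n`-inner product space. -/
theorem nip_cauchy_schwarz {𝕜 : Type*} [RCLike 𝕜] {m : ℕ} {H : Type*}
    [AddCommGroup H] [Module 𝕜 H] (S : NInnerProductSpace 𝕜 m H)
    (x y : H) (rest : Fin m → H) :
    ‖S.ip x y rest‖ ≤
      Real.sqrt (re (S.ip x x rest)) * Real.sqrt (re (S.ip y y rest)) := by
  set T := S.ip x y rest with hT
  set a := re (S.ip x x rest) with ha
  set b := re (S.ip y y rest) with hb
  have hB : S.ip y y rest = (b : 𝕜) :=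
    (RCLike.conj_eq_iff_re.mp (S.conj_symm y y rest).symm).symm
  have key : ∀ t : ℝ, 0 ≤ (b * ‖T‖ ^ 2) * (t * t) + (-(2 * ‖T‖ ^ 2)) * t + a := by
    intro t
    rw [show t * t = t ^ 2 from (sq t).symm]
    have h0 := S.nonneg (x + ((-(t : 𝕜)) * T) • y) rest
    rw [NIP.expand, hB, ← hT] at h0
    have h1 : T * starRingEnd 𝕜 T = (‖T‖ : 𝕜) ^ 2 := RCLike.mul_conj T
    have h2 : starRingEnd 𝕜 T * T = (‖T‖ : 𝕜) ^ 2 := RCLike.conj_mul T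
    have e : S.ip x x rest + starRingEnd 𝕜 (-(t : 𝕜) * T) * T
        + (-(t : 𝕜) * T) * starRingEnd 𝕜 T
        + (-(t : 𝕜) * T) * starRingEnd 𝕜 (-(t : 𝕜) * T) * (b : 𝕜)
        = S.ip x x rest + (((b * ‖T‖ ^ 2) * t ^ 2 + (-(2 * ‖T‖ ^ 2)) * t : ℝ) : 𝕜) := by
      rw [map_mul, map_neg, RCLike.conj_ofReal]
      push_cast
      linear_combination (-(t : 𝕜)) * h2 + ((t : 𝕜) ^ 2 * (b : 𝕜) - (t : 𝕜)) * h1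
    rw [e, map_add, RCLike.ofReal_re] at h0
    linarith
  have hd := discrim_le_zero key
  rw [discrim] at hd
  have ha0 : 0 ≤ a := S.nonneg x rest
  have hb0 : 0 ≤ b := S.nonneg y rest
  rcases eq_or_ne T 0 with h | h
  · rw [h, norm_zero]
    positivity
  · have hTn : 0 < ‖T‖ := norm_pos_iff.mpr h
    have h3 : ‖T‖ ^ 2 ≤ a * b := by nlinarith [mul_pos hTn hTn]
    rw [← Real.sqrt_mul ha0]
    have := Real.sqrt_le_sqrt h3
    rwa [Real.sqrt_sq (norm_nonneg T)] at this
end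

section
/- Let H, K be nonzero Hilbert spaces, Q a bounded operator on H and T a bounded operator on K. Then the operator norm of the tensor product satisfies ‖Q ⊗ T‖ = ‖Q‖ · ‖T‖. -/
open scoped RealInnerProductSpace
open Finset

lemma gram_le {ι H K : Type*} [Fintype ι]
    [NormedAddCommGroup H] [InnerProductSpace ℝ H]
    [NormedAddCommGroup K] [InnerProductSpace ℝ K]
    (Q : H →L[ℝ] H) (u : ι → H) (v : ι → K) :
    ∑ i, ∑ j, ⟪Q (u i), Q (u j)⟫ * ⟪v i, v j⟫ ≤
      ‖Q‖ ^ 2 * ∑ i, ∑ j, ⟪u i, u j⟫ * ⟪v i, v j⟫ := by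
  set V := Submodule.span ℝ (Set.range v) with hV
  haveI : FiniteDimensional ℝ V := FiniteDimensional.span_of_finite ℝ (Set.finite_range v)
  set b := stdOrthonormalBasis ℝ V with hb
  set c : Fin (Module.finrank ℝ V) → ι → ℝ := fun k i => ⟪((b k : V) : K), v i⟫ with hc
  have hv : ∀ i, v i ∈ V := fun i => Submodule.subset_span ⟨i, rfl⟩
  have hvv : ∀ i j, ⟪v i, v j⟫ = ∑ k, c k i * c k j := by
    intro i j
    have := b.sum_inner_mul_inner (⟨v i, hv i⟩ : V) ⟨v j, hv j⟩
    rw [Submodule.coe_inner] at this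
    rw [← this]
    refine Finset.sum_congr rfl fun k _ => ?_
    rw [Submodule.coe_inner, Submodule.coe_inner, hc]
    simp [real_inner_comm]
  have key : ∀ (R : H →L[ℝ] H),
      ∑ i, ∑ j, ⟪R (u i), R (u j)⟫ * ⟪v i, v j⟫
        = ∑ k, ⟪R (∑ i, c k i • u i), R (∑ i, c k i • u i)⟫ := by
    intro R
    have : ∀ k, ⟪R (∑ i, c k i • u i), R (∑ i, c k i • u i)⟫
        = ∑ i, ∑ j, (c k i * c k j) * ⟪R (u i), R (u j)⟫ := by
      intro k
      rw [map_sum]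
      rw [sum_inner]
      refine Finset.sum_congr rfl fun i _ => ?_
      rw [inner_sum]
      refine Finset.sum_congr rfl fun j _ => ?_
      rw [map_smul, map_smul, real_inner_smul_left, real_inner_smul_right]
      ring
    calc ∑ i, ∑ j, ⟪R (u i), R (u j)⟫ * ⟪v i, v j⟫
        = ∑ i, ∑ j, ∑ k, (c k i * c k j) * ⟪R (u i), R (u j)⟫ := by
          refine Finset.sum_congr rfl fun i _ => Finset.sum_congr rfl fun j _ => ?_
          rw [hvv, Finset.mul_sum]
          exact Finset.sum_congr rfl fun k _ => by ring
      _ = ∑ i, ∑ k, ∑ j, (c k i * c k j) * ⟪R (u i), R (u j)⟫ :=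
          Finset.sum_congr rfl fun i _ => Finset.sum_comm
      _ = ∑ k, ∑ i, ∑ j, (c k i * c k j) * ⟪R (u i), R (u j)⟫ := Finset.sum_comm
      _ = ∑ k, ⟪R (∑ i, c k i • u i), R (∑ i, c k i • u i)⟫ :=
          Finset.sum_congr rfl fun k _ => (this k).symm
  rw [key Q]
  have keyId : ∑ i, ∑ j, ⟪u i, u j⟫ * ⟪v i, v j⟫
      = ∑ k, ⟪(∑ i, c k i • u i), (∑ i, c k i • u i)⟫ := by
    have := key (ContinuousLinearMap.id ℝ H)
    simpa using this
  rw [keyId, Finset.mul_sum]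
  refine Finset.sum_le_sum fun k _ => ?_
  rw [real_inner_self_eq_norm_sq, real_inner_self_eq_norm_sq, ← mul_pow]
  exact pow_le_pow_left₀ (norm_nonneg _) (Q.le_opNorm _) 2

section

variable {H K E : Type*}
    [NormedAddCommGroup H] [InnerProductSpace ℝ H]
    [NormedAddCommGroup K] [InnerProductSpace ℝ K]
    [NormedAddCommGroup E] [InnerProductSpace ℝ E]
    (tmul : H →L[ℝ] K →L[ℝ] E)
    (htp1 : ∀ (p p' : H) (q q' : K), ⟪tmul p q, tmul p' q'⟫ = ⟪p, p'⟫ * ⟪q, q'⟫)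

include htp1

lemma norm_tmul_sum_sq {ι : Type*} [Fintype ι] (u : ι → H) (v : ι → K) :
    ‖∑ i, tmul (u i) (v i)‖ ^ 2 = ∑ i, ∑ j, ⟪u i, u j⟫ * ⟪v i, v j⟫ := by
  rw [← real_inner_self_eq_norm_sq, sum_inner]
  exact Finset.sum_congr rfl fun i _ => by
    rw [inner_sum]; exact Finset.sum_congr rfl fun j _ => htp1 _ _ _ _

lemma keyQ {ι : Type*} [Fintype ι] (Q : H →L[ℝ] H) (u : ι → H) (v : ι → K) :
    ‖∑ i, tmul (Q (u i)) (v i)‖ ≤ ‖Q‖ * ‖∑ i, tmul (u i) (v i)‖ := by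
  have h2 : ‖∑ i, tmul (Q (u i)) (v i)‖ ^ 2 ≤ (‖Q‖ * ‖∑ i, tmul (u i) (v i)‖) ^ 2 := by
    rw [mul_pow, norm_tmul_sum_sq tmul htp1, norm_tmul_sum_sq tmul htp1]
    exact gram_le Q u v
  have := Real.sqrt_le_sqrt h2
  rwa [Real.sqrt_sq (norm_nonneg _), Real.sqrt_sq (by positivity)] at this

lemma keyT {ι : Type*} [Fintype ι] (T : K →L[ℝ] K) (u : ι → H) (v : ι → K) :
    ‖∑ i, tmul (u i) (T (v i))‖ ≤ ‖T‖ * ‖∑ i, tmul (u i) (v i)‖ := by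
  have h2 : ‖∑ i, tmul (u i) (T (v i))‖ ^ 2 ≤ (‖T‖ * ‖∑ i, tmul (u i) (v i)‖) ^ 2 := by
    rw [mul_pow, norm_tmul_sum_sq tmul htp1, norm_tmul_sum_sq tmul htp1]
    have := gram_le T v u
    calc ∑ i, ∑ j, ⟪u i, u j⟫ * ⟪T (v i), T (v j)⟫
        = ∑ i, ∑ j, ⟪T (v i), T (v j)⟫ * ⟪u i, u j⟫ :=
          Finset.sum_congr rfl fun i _ => Finset.sum_congr rfl fun j _ => mul_comm _ _
      _ ≤ ‖T‖ ^ 2 * ∑ i, ∑ j, ⟪v i, v j⟫ * ⟪u i, u j⟫ := this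
      _ = ‖T‖ ^ 2 * ∑ i, ∑ j, ⟪u i, u j⟫ * ⟪v i, v j⟫ := by
          congr 1
          exact Finset.sum_congr rfl fun i _ => Finset.sum_congr rfl fun j _ => mul_comm _ _
  have := Real.sqrt_le_sqrt h2
  rwa [Real.sqrt_sq (norm_nonneg _), Real.sqrt_sq (by positivity)] at this

lemma norm_tmul (p : H) (q : K) : ‖tmul p q‖ = ‖p‖ * ‖q‖ := by
  have h := htp1 p p q q
  rw [real_inner_self_eq_norm_sq, real_inner_self_eq_norm_sq, real_inner_self_eq_norm_sq] at h
  have h2 : ‖tmul p q‖ ^ 2 = (‖p‖ * ‖q‖) ^ 2 := by rw [mul_pow]; exact h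
  have := congrArg Real.sqrt h2
  rwa [Real.sqrt_sq (norm_nonneg _), Real.sqrt_sq (by positivity)] at this

end


/-- `IsHilbertTensorProduct tmul` says that the continuous bilinear map
`tmul : H →L K →L E` realizes `E` as the Hilbert space tensor product `H ⊗ K`:
`⟨p ⊗ q, p' ⊗ q'⟩ = ⟨p, p'⟩⟨q, q'⟩` and the elementary tensors span a dense
subspace of `E`. -/
def IsHilbertTensorProduct {H K E : Type*}
    [NormedAddCommGroup H] [InnerProductSpace ℝ H]
    [NormedAddCommGroup K] [InnerProductSpace ℝ K]
    [NormedAddCommGroup E] [InnerProductSpace ℝ E]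
    (tmul : H →L[ℝ] K →L[ℝ] E) : Prop :=
  (∀ (p p' : H) (q q' : K), ⟪tmul p q, tmul p' q'⟫ = ⟪p, p'⟫ * ⟪q, q'⟫) ∧
  Dense ((Submodule.span ℝ (Set.range fun z : H × K => tmul z.1 z.2) : Submodule ℝ E) : Set E)

/-- for nonzero Hilbert spaces, `‖Q ⊗ T‖ = ‖Q‖ · ‖T‖`. -/
theorem tensor_op_norm {H K E : Type*}
    [NormedAddCommGroup H] [InnerProductSpace ℝ H] [CompleteSpace H]
    [NormedAddCommGroup K] [InnerProductSpace ℝ K] [CompleteSpace K]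
    [NormedAddCommGroup E] [InnerProductSpace ℝ E] [CompleteSpace E]
    (tmul : H →L[ℝ] K →L[ℝ] E) (htp : IsHilbertTensorProduct tmul)
    [Nontrivial H] [Nontrivial K]
    (Q : H →L[ℝ] H) (T : K →L[ℝ] K) (QT : E →L[ℝ] E)
    (hQT : ∀ (f : H) (g : K), QT (tmul f g) = tmul (Q f) (T g)) :
    ‖QT‖ = ‖Q‖ * ‖T‖ := by
  obtain ⟨htp1, hdense⟩ := htp
  have hnorm := norm_tmul tmul htp1
  -- upper bound on the dense span
  have hspan : ∀ x ∈ (Submodule.span ℝ (Set.range fun z : H × K => tmul z.1 z.2) :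
      Submodule ℝ E), ‖QT x‖ ≤ ‖Q‖ * ‖T‖ * ‖x‖ := by
    intro x hx
    obtain ⟨n, f, g, hsum⟩ := Submodule.mem_span_set'.mp hx
    have hz : ∀ i : Fin n, ∃ z : H × K, tmul z.1 z.2 = (g i : E) := fun i => (g i).2
    choose z hz using hz
    set u : Fin n → H := fun i => f i • (z i).1 with hu
    set v : Fin n → K := fun i => (z i).2 with hv
    have hx2 : x = ∑ i, tmul (u i) (v i) := by
      rw [← hsum]
      refine Finset.sum_congr rfl fun i _ => ?_
      rw [hu, hv]
      simp only [map_smul, ContinuousLinearMap.smul_apply, hz i]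
    have hQTx : QT x = ∑ i, tmul (Q (u i)) (T (v i)) := by
      rw [hx2, map_sum]; exact Finset.sum_congr rfl fun i _ => hQT _ _
    calc ‖QT x‖ = ‖∑ i, tmul (Q (u i)) (T (v i))‖ := by rw [hQTx]
      _ ≤ ‖T‖ * ‖∑ i, tmul (Q (u i)) (v i)‖ := keyT tmul htp1 T _ _
      _ ≤ ‖T‖ * (‖Q‖ * ‖∑ i, tmul (u i) (v i)‖) :=
          mul_le_mul_of_nonneg_left (keyQ tmul htp1 Q u v) (norm_nonneg T)
      _ = ‖Q‖ * ‖T‖ * ‖x‖ := by rw [← hx2]; ring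
  have hupper : ‖QT‖ ≤ ‖Q‖ * ‖T‖ := by
    refine ContinuousLinearMap.opNorm_le_bound _ (by positivity) fun x => ?_
    have hC : IsClosed {y : E | ‖QT y‖ ≤ ‖Q‖ * ‖T‖ * ‖y‖} :=
      isClosed_le (QT.continuous.norm) (continuous_const.mul continuous_norm)
    have hsub : ((Submodule.span ℝ (Set.range fun z : H × K => tmul z.1 z.2) :
        Submodule ℝ E) : Set E) ⊆ {y : E | ‖QT y‖ ≤ ‖Q‖ * ‖T‖ * ‖y‖} :=
      fun y hy => hspan y hy
    have := closure_minimal hsub hC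
    rw [hdense.closure_eq] at this
    exact this (Set.mem_univ x)
  -- lower bound
  have h1 : ∀ (f : H) (g : K), ‖Q f‖ * ‖T g‖ ≤ ‖QT‖ * (‖f‖ * ‖g‖) := by
    intro f g
    calc ‖Q f‖ * ‖T g‖ = ‖tmul (Q f) (T g)‖ := (hnorm _ _).symm
      _ = ‖QT (tmul f g)‖ := by rw [hQT]
      _ ≤ ‖QT‖ * ‖tmul f g‖ := QT.le_opNorm _
      _ = ‖QT‖ * (‖f‖ * ‖g‖) := by rw [hnorm]
  have hlow : ‖Q‖ * ‖T‖ ≤ ‖QT‖ := by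
    rcases eq_or_lt_of_le (norm_nonneg Q) with hQ0 | hQ0
    · rw [← hQ0, zero_mul]; exact norm_nonneg QT
    have hT' : ∀ g : K, ‖Q‖ * ‖T g‖ ≤ ‖QT‖ * ‖g‖ := by
      intro g
      rcases eq_or_lt_of_le (norm_nonneg (T g)) with hTg | hTg
      · rw [← hTg, mul_zero]; positivity
      · have hQle : ‖Q‖ ≤ ‖QT‖ * ‖g‖ / ‖T g‖ := by
          refine ContinuousLinearMap.opNorm_le_bound _ (by positivity) fun f => ?_
          rw [div_mul_eq_mul_div, le_div_iff₀ hTg]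
          calc ‖Q f‖ * ‖T g‖ ≤ ‖QT‖ * (‖f‖ * ‖g‖) := h1 f g
            _ = ‖QT‖ * ‖g‖ * ‖f‖ := by ring
        calc ‖Q‖ * ‖T g‖ ≤ ‖QT‖ * ‖g‖ / ‖T g‖ * ‖T g‖ :=
              mul_le_mul_of_nonneg_right hQle hTg.le
          _ = ‖QT‖ * ‖g‖ := div_mul_cancel₀ _ hTg.ne'
    have hTle : ‖T‖ ≤ ‖QT‖ / ‖Q‖ := by
      refine ContinuousLinearMap.opNorm_le_bound _ (by positivity) fun g => ?_
      rw [div_mul_eq_mul_div, le_div_iff₀ hQ0]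
      calc ‖T g‖ * ‖Q‖ = ‖Q‖ * ‖T g‖ := mul_comm _ _
        _ ≤ ‖QT‖ * ‖g‖ := hT' g
    calc ‖Q‖ * ‖T‖ ≤ ‖Q‖ * (‖QT‖ / ‖Q‖) := mul_le_mul_of_nonneg_left hTle hQ0.le
      _ = ‖QT‖ := by field_simp
  exact le_antisymm hupper hlow
end

section
/- Let H and K be separable Hilbert spaces, let {pᵢ}ᵢ₌₁^∞ ⊆ H and {qⱼ}ⱼ₌₁^∞ ⊆ K be sequences of nonzero vectors. The doubly indexed family {pᵢ ⊗ qⱼ}ᵢ,ⱼ is a frame for the Hilbert space tensor product H ⊗ K if and only if {pᵢ} is a frame for H and {qⱼ} is a frame for K. -/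
open scoped RealInnerProductSpace

/-- `IsFrameWith A B f`: the family `f` is a frame with frame bounds `A ≤ B`,
i.e. `A‖x‖² ≤ Σᵢ |⟨x, fᵢ⟩|² ≤ B‖x‖²` for all `x`. -/
def IsFrameWith {ι X : Type*} [NormedAddCommGroup X] [InnerProductSpace ℝ X]
    (A B : ℝ) (f : ι → X) : Prop :=
  0 < A ∧ A ≤ B ∧
    ∀ x : X, A * ‖x‖ ^ 2 ≤ (∑' i : ι, ⟪x, f i⟫ ^ 2) ∧
      (∑' i : ι, ⟪x, f i⟫ ^ 2) ≤ B * ‖x‖ ^ 2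

open scoped ENNReal

/-!
Frame sums are taken in `ℝ≥0∞`, where products and iterated sums need no summability side
conditions. Since `⟪x ⊗ y, pᵢ ⊗ qⱼ⟫ = ⟪x, pᵢ⟫⟪y, qⱼ⟫`, the frame sum of `x ⊗ y` with respect to
`{pᵢ ⊗ qⱼ}` is the product of the frame sums of `x` and of `y`. Fixing `y = q₀`, whose frame sum
is positive because `q₀ ≠ 0` and finite because of the upper frame bound, turns the frame bounds
of `{pᵢ ⊗ qⱼ}` into frame bounds for `{pᵢ}`; symmetrically for `{qⱼ}`.

Conversely, for `u ∈ H ⊗ K` and fixed `i`, `Σⱼ ⟪u, pᵢ ⊗ qⱼ⟫²` is the frame sum of the Riesz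
representative of `y ↦ ⟪u, pᵢ ⊗ y⟫`. So the frame `{qⱼ}` can be traded for a Hilbert basis `{cₖ}`
of `K` at the price of the bounds `C, D`, and then `{pᵢ}` for a Hilbert basis `{bₗ}` of `H` at the
price of `A, B`. What remains is `Σ ⟪u, bₗ ⊗ cₖ⟫² = ‖u‖²`, Parseval's identity for the Hilbert
basis `{bₗ ⊗ cₖ}` of `H ⊗ K`.
-/

section FrameSum

variable {ι κ X Y : Type*} [NormedAddCommGroup X] [InnerProductSpace ℝ X]
    [NormedAddCommGroup Y] [InnerProductSpace ℝ Y]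

noncomputable def frameSum (f : ι → X) (x : X) : ℝ≥0∞ :=
  ∑' i, ENNReal.ofReal (⟪x, f i⟫ ^ 2)

lemma frameSum_self_ne_zero {f : ι → X} {i : ι} (hf : f i ≠ 0) : frameSum f (f i) ≠ 0 := by
  have : 0 < ⟪f i, f i⟫ := real_inner_self_pos.2 hf
  exact ((ENNReal.ofReal_pos.2 (by positivity)).trans_le (ENNReal.le_tsum i)).ne'

theorem isFrameWith_iff_frameSum {A B : ℝ} {f : ι → X} :
    IsFrameWith A B f ↔ 0 < A ∧ A ≤ B ∧ ∀ x : X,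
      ENNReal.ofReal A * ENNReal.ofReal (‖x‖ ^ 2) ≤ frameSum f x ∧
        frameSum f x ≤ ENNReal.ofReal B * ENNReal.ofReal (‖x‖ ^ 2) := by
  refine and_congr_right fun hA => and_congr_right fun hAB => forall_congr' fun x => ?_
  simp only [← ENNReal.ofReal_mul hA.le, ← ENNReal.ofReal_mul (hA.trans_le hAB).le]
  constructor
  · rintro ⟨hlow, hup⟩
    have hs : Summable fun i => ⟪x, f i⟫ ^ 2 := by
      by_contra hs
      rw [tsum_eq_zero_of_not_summable hs] at hlow
      have hx : x = 0 := by
        by_contra hx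
        have : 0 < A * ‖x‖ ^ 2 := by positivity
        linarith
      exact hs (by simp [hx, summable_zero])
    rw [frameSum, ← ENNReal.ofReal_tsum_of_nonneg (fun i => sq_nonneg _) hs]
    exact ⟨ENNReal.ofReal_le_ofReal hlow, ENNReal.ofReal_le_ofReal hup⟩
  · rintro ⟨hlow, hup⟩
    have hs : Summable fun i => ⟪x, f i⟫ ^ 2 := by
      refine (ENNReal.summable_toReal (ne_top_of_le_ne_top ENNReal.ofReal_ne_top hup)).congr
        fun i => ENNReal.toReal_ofReal (sq_nonneg _)
    rw [frameSum, ← ENNReal.ofReal_tsum_of_nonneg (fun i => sq_nonneg _) hs] at hlow hup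
    exact ⟨(ENNReal.ofReal_le_ofReal_iff (tsum_nonneg fun i => sq_nonneg _)).1 hlow,
      (ENNReal.ofReal_le_ofReal_iff (by nlinarith [sq_nonneg ‖x‖])).1 hup⟩

lemma IsFrameWith.frameSum_ne_top {A B : ℝ} {f : ι → X} (hf : IsFrameWith A B f) (x : X) :
    frameSum f x ≠ ∞ :=
  ne_top_of_le_ne_top (by finiteness) ((isFrameWith_iff_frameSum.1 hf).2.2 x).2

lemma HilbertBasis.frameSum_eq [CompleteSpace X] (b : HilbertBasis ι ℝ X) (x : X) :
    frameSum b x = ENNReal.ofReal (‖x‖ ^ 2) := by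
  have h := b.hasSum_inner_mul_inner x x
  rw [real_inner_self_eq_norm_sq] at h
  simp only [real_inner_comm x, ← pow_two] at h
  rw [frameSum, ← h.tsum_eq, ENNReal.ofReal_tsum_of_nonneg (fun i => sq_nonneg _) h.summable]

lemma IsFrameWith.of_frameSum_comp {A B c t : ℝ} {f : ι → X} {g : κ → Y}
    (hg : IsFrameWith A B g) (L : X → Y) (hc : 0 < c) (ht : 0 < t)
    (hL : ∀ x, ‖L x‖ ^ 2 = c * ‖x‖ ^ 2)
    (h : ∀ x, frameSum g (L x) = ENNReal.ofReal t * frameSum f x) :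
    IsFrameWith (A * c / t) (B * c / t) f := by
  rw [isFrameWith_iff_frameSum] at hg ⊢
  obtain ⟨hA, hAB, hg⟩ := hg
  refine ⟨by positivity, by gcongr, fun x => ?_⟩
  have rescale : ∀ D, 0 ≤ D → ENNReal.ofReal t * (ENNReal.ofReal (D * c / t) *
      ENNReal.ofReal (‖x‖ ^ 2)) = ENNReal.ofReal D * ENNReal.ofReal (‖L x‖ ^ 2) := by
    intro D hD
    rw [hL, ← ENNReal.ofReal_mul (by positivity), ← ENNReal.ofReal_mul ht.le,
      ← ENNReal.ofReal_mul hD]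
    congr 1
    field_simp
  have ht' : ENNReal.ofReal t ≠ 0 := ENNReal.ofReal_ne_zero_iff.2 ht
  constructor
  · rw [← ENNReal.mul_le_mul_iff_right ht' ENNReal.ofReal_ne_top, rescale A hA.le, ← h]
    exact (hg (L x)).1
  · rw [← ENNReal.mul_le_mul_iff_right ht' ENNReal.ofReal_ne_top, rescale B (hA.trans_le hAB).le,
      ← h]
    exact (hg (L x)).2

end FrameSum

lemma ContinuousLinearMap.apply_mem_of_topologicalClosure_span_eq_top {R M N : Type*}
    [Semiring R] [TopologicalSpace M] [AddCommMonoid M] [Module R M] [ContinuousAdd M]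
    [ContinuousConstSMul R M] [TopologicalSpace N] [AddCommMonoid N] [Module R N]
    (L : M →L[R] N) {P : Submodule R N} (hP : IsClosed (P : Set N)) {s : Set M}
    (hs : (Submodule.span R s).topologicalClosure = ⊤) (hsP : ∀ x ∈ s, L x ∈ P) (x : M) :
    L x ∈ P := by
  have : (Submodule.span R s).topologicalClosure ≤ P.comap (L : M →ₗ[R] N) :=
    Submodule.topologicalClosure_minimal _ (Submodule.span_le.2 fun x hx => hsP x hx)
      (hP.preimage L.continuous)
  exact this (hs ▸ Submodule.mem_top)

section Tensor

variable {ι κ ν H K E : Type*}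
    [NormedAddCommGroup H] [InnerProductSpace ℝ H]
    [NormedAddCommGroup K] [InnerProductSpace ℝ K]
    [NormedAddCommGroup E] [InnerProductSpace ℝ E]

lemma frameSum_tmul_eq_tsum_frameSum [CompleteSpace K] (tmul : H →L[ℝ] K →L[ℝ] E) (p : ι → H)
    (q : κ → K) (u : E) :
    frameSum (fun z : ι × κ => tmul (p z.1) (q z.2)) u =
      ∑' i, frameSum q ((InnerProductSpace.toDual ℝ K).symm ((innerSL ℝ u).comp (tmul (p i)))) := by
  simp [frameSum, ENNReal.tsum_prod', InnerProductSpace.toDual_symm_apply]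

lemma frameSum_tmul_bounds [CompleteSpace K] (tmul : H →L[ℝ] K →L[ℝ] E) (p : ι → H)
    {C D : ℝ} {q : ν → K} (hq : IsFrameWith C D q) (c : HilbertBasis κ ℝ K) (u : E) :
    ENNReal.ofReal C * frameSum (fun z : ι × κ => tmul (p z.1) (c z.2)) u ≤
        frameSum (fun z : ι × ν => tmul (p z.1) (q z.2)) u ∧
      frameSum (fun z : ι × ν => tmul (p z.1) (q z.2)) u ≤
        ENNReal.ofReal D * frameSum (fun z : ι × κ => tmul (p z.1) (c z.2)) u := by
  obtain ⟨-, -, hq⟩ := isFrameWith_iff_frameSum.1 hq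
  simp only [frameSum_tmul_eq_tsum_frameSum, c.frameSum_eq, ← ENNReal.tsum_mul_left]
  exact ⟨ENNReal.tsum_le_tsum fun i => (hq _).1, ENNReal.tsum_le_tsum fun i => (hq _).2⟩

lemma frameSum_flip_tmul (tmul : H →L[ℝ] K →L[ℝ] E) (p : ι → H) (q : κ → K) (u : E) :
    frameSum (fun z : κ × ι => tmul.flip (q z.1) (p z.2)) u =
      frameSum (fun z : ι × κ => tmul (p z.1) (q z.2)) u := by
  simp only [frameSum, ContinuousLinearMap.flip_apply, ENNReal.tsum_prod']
  exact ENNReal.tsum_comm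

namespace IsHilbertTensorProduct

variable {tmul : H →L[ℝ] K →L[ℝ] E} (htp : IsHilbertTensorProduct tmul)
include htp

lemma norm_tmul_sq (x : H) (y : K) : ‖tmul x y‖ ^ 2 = ‖x‖ ^ 2 * ‖y‖ ^ 2 := by
  rw [← real_inner_self_eq_norm_sq, htp.1, real_inner_self_eq_norm_sq,
    real_inner_self_eq_norm_sq]

lemma frameSum_tmul (p : ι → H) (q : κ → K) (x : H) (y : K) :
    frameSum (fun z : ι × κ => tmul (p z.1) (q z.2)) (tmul x y) = frameSum p x * frameSum q y := by
  simp only [frameSum, htp.1, mul_pow, ENNReal.ofReal_mul (sq_nonneg _), ENNReal.tsum_prod',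
    ENNReal.tsum_mul_left, ENNReal.tsum_mul_right]

lemma orthonormal_tmul {b : ι → H} {c : κ → K} (hb : Orthonormal ℝ b) (hc : Orthonormal ℝ c) :
    Orthonormal ℝ fun z : ι × κ => tmul (b z.1) (c z.2) := by
  classical
  rw [orthonormal_iff_ite] at hb hc ⊢
  rintro ⟨i, j⟩ ⟨i', j'⟩
  simp only [htp.1, hb, hc, Prod.mk.injEq]
  split_ifs <;> simp_all

lemma topologicalClosure_span_tmul_eq_top (b : HilbertBasis ι ℝ H) (c : HilbertBasis κ ℝ K) :
    ⊤ ≤ (Submodule.span ℝ (Set.range fun z : ι × κ => tmul (b z.1) (c z.2))).topologicalClosure :=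
    by
  set S := Submodule.span ℝ (Set.range fun z : ι × κ => tmul (b z.1) (c z.2))
  set M := S.topologicalClosure
  have hM : IsClosed (M : Set E) := S.isClosed_topologicalClosure
  have hbc : ∀ x ∈ Set.range b, ∀ y ∈ Set.range c, tmul x y ∈ M := by
    rintro - ⟨i, rfl⟩ - ⟨j, rfl⟩
    exact S.le_topologicalClosure (Submodule.subset_span ⟨(i, j), rfl⟩)
  have hmem : ∀ x y, tmul x y ∈ M := fun x =>
    (tmul x).apply_mem_of_topologicalClosure_span_eq_top hM c.dense_span fun y hy =>
      (tmul.flip y).apply_mem_of_topologicalClosure_span_eq_top hM b.dense_span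
        (fun x hx => hbc x hx y hy) x
  have hspan : Submodule.span ℝ (Set.range fun z : H × K => tmul z.1 z.2) ≤ M :=
    Submodule.span_le.2 <| by rintro - ⟨z, rfl⟩; exact hmem z.1 z.2
  exact fun u _ => closure_minimal hspan hM (htp.2 u)

noncomputable def hilbertBasis [CompleteSpace E] (b : HilbertBasis ι ℝ H)
    (c : HilbertBasis κ ℝ K) : HilbertBasis (ι × κ) ℝ E :=
  HilbertBasis.mk (htp.orthonormal_tmul b.orthonormal c.orthonormal)
    (htp.topologicalClosure_span_tmul_eq_top b c)

@[simp]
lemma coe_hilbertBasis [CompleteSpace E] (b : HilbertBasis ι ℝ H) (c : HilbertBasis κ ℝ K) :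
    ⇑(htp.hilbertBasis b c) = fun z : ι × κ => tmul (b z.1) (c z.2) :=
  HilbertBasis.coe_mk _ _

theorem isFrameWith_tmul [CompleteSpace H] [CompleteSpace K] [CompleteSpace E] {A B C D : ℝ}
    {p : ι → H} {q : κ → K} (hp : IsFrameWith A B p) (hq : IsFrameWith C D q) :
    IsFrameWith (A * C) (B * D) fun z : ι × κ => tmul (p z.1) (q z.2) := by
  obtain ⟨_, b, -⟩ := exists_hilbertBasis ℝ H
  obtain ⟨_, c, -⟩ := exists_hilbertBasis ℝ K
  have hA := hp.1
  have hC := hq.1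
  have hB := hA.trans_le hp.2.1
  have hD := hC.trans_le hq.2.1
  refine isFrameWith_iff_frameSum.2 ⟨mul_pos hA hC, mul_le_mul hp.2.1 hq.2.1 hC.le hB.le,
    fun u => ?_⟩
  obtain ⟨hCT, hTD⟩ := frameSum_tmul_bounds tmul p hq c u
  obtain ⟨hAN, hNB⟩ := frameSum_tmul_bounds tmul.flip c hp b u
  have hN := (htp.hilbertBasis b c).frameSum_eq u
  simp only [frameSum_flip_tmul, coe_hilbertBasis] at hAN hNB hN
  rw [hN] at hAN hNB
  rw [ENNReal.ofReal_mul hA.le, ENNReal.ofReal_mul hB.le]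
  constructor
  · calc _ = ENNReal.ofReal C * (ENNReal.ofReal A * ENNReal.ofReal (‖u‖ ^ 2)) := by ring
      _ ≤ _ := by gcongr
      _ ≤ _ := hCT
  · calc _ ≤ _ := hTD
      _ ≤ ENNReal.ofReal D * (ENNReal.ofReal B * ENNReal.ofReal (‖u‖ ^ 2)) := by gcongr
      _ = _ := by ring

lemma isFrameWith_left_of_tmul {A B : ℝ} {p : ι → H} {q : κ → K}
    (hF : IsFrameWith A B fun z : ι × κ => tmul (p z.1) (q z.2)) {x : H} (hx : frameSum p x ≠ 0)
    {y : K} (hy : frameSum q y ≠ 0) :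
    IsFrameWith (A * ‖y‖ ^ 2 / (frameSum q y).toReal) (B * ‖y‖ ^ 2 / (frameSum q y).toReal) p := by
  have hy_top : frameSum q y ≠ ∞ := fun h =>
    hF.frameSum_ne_top (tmul x y) (by rw [htp.frameSum_tmul, h, ENNReal.mul_top hx])
  have hy0 : y ≠ 0 := by rintro rfl; simp [frameSum] at hy
  refine hF.of_frameSum_comp (fun x => tmul x y) (by positivity) (ENNReal.toReal_pos hy hy_top)
    (fun x => by rw [htp.norm_tmul_sq, mul_comm]) fun x => ?_
  rw [htp.frameSum_tmul, ENNReal.ofReal_toReal hy_top, mul_comm]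

lemma isFrameWith_right_of_tmul {A B : ℝ} {p : ι → H} {q : κ → K}
    (hF : IsFrameWith A B fun z : ι × κ => tmul (p z.1) (q z.2)) {x : H} (hx : frameSum p x ≠ 0)
    {y : K} (hy : frameSum q y ≠ 0) :
    IsFrameWith (A * ‖x‖ ^ 2 / (frameSum p x).toReal) (B * ‖x‖ ^ 2 / (frameSum p x).toReal) q := by
  have hx_top : frameSum p x ≠ ∞ := fun h =>
    hF.frameSum_ne_top (tmul x y) (by rw [htp.frameSum_tmul, h, ENNReal.top_mul hy])
  have hx0 : x ≠ 0 := by rintro rfl; simp [frameSum] at hx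
  refine hF.of_frameSum_comp (tmul x) (by positivity) (ENNReal.toReal_pos hx hx_top)
    (fun y => htp.norm_tmul_sq x y) fun y => ?_
  rw [htp.frameSum_tmul, ENNReal.ofReal_toReal hx_top]

end IsHilbertTensorProduct

end Tensor

/-- for sequences of nonzero vectors, `{pᵢ ⊗ qⱼ}` is a frame for
`H ⊗ K` iff `{pᵢ}` is a frame for `H` and `{qⱼ}` is a frame for `K`. -/
theorem tensor_frame_iff {H K E : Type*}
    [NormedAddCommGroup H] [InnerProductSpace ℝ H] [CompleteSpace H]
    [NormedAddCommGroup K] [InnerProductSpace ℝ K] [CompleteSpace K]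
    [NormedAddCommGroup E] [InnerProductSpace ℝ E] [CompleteSpace E]
    (tmul : H →L[ℝ] K →L[ℝ] E) (htp : IsHilbertTensorProduct tmul)
    (p_ : ℕ → H) (q_ : ℕ → K) (hp : ∀ i, p_ i ≠ 0) (hq : ∀ j, q_ j ≠ 0) :
    (∃ A B : ℝ, IsFrameWith A B (fun ij : ℕ × ℕ => tmul (p_ ij.1) (q_ ij.2))) ↔
      (∃ A B : ℝ, IsFrameWith A B p_) ∧ (∃ C D : ℝ, IsFrameWith C D q_) := by
  constructor
  · rintro ⟨A, B, hF⟩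
    have hp0 := frameSum_self_ne_zero (hp 0)
    have hq0 := frameSum_self_ne_zero (hq 0)
    exact ⟨⟨_, _, htp.isFrameWith_left_of_tmul hF hp0 hq0⟩,
      ⟨_, _, htp.isFrameWith_right_of_tmul hF hp0 hq0⟩⟩
  · rintro ⟨⟨A, B, hP⟩, C, D, hQ⟩
    exact ⟨_, _, htp.isFrameWith_tmul hP hQ⟩
end

section
/- Let {pᵢ} be a frame for a Hilbert space H with bounds A, B and {qⱼ} a frame for a Hilbert space K with bounds C, D. Then {pᵢ ⊗ qⱼ}ᵢ,ⱼ is a frame for H ⊗ K with bounds AC and BD. -/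
open scoped RealInnerProductSpace

open scoped ENNReal

/-- The frame inequalities force summability of the frame coefficients. -/
lemma IsFrameWith.summable {ι X : Type*} [NormedAddCommGroup X] [InnerProductSpace ℝ X]
    {A B : ℝ} {f : ι → X} (h : IsFrameWith A B f) (x : X) :
    Summable (fun i => ⟪x, f i⟫ ^ 2) := by
  by_cases hx : x = 0
  · subst hx
    simpa [inner_zero_left] using summable_zero
  · by_contra hs
    have h0 : (∑' i, ⟪x, f i⟫ ^ 2) = 0 := tsum_eq_zero_of_not_summable hs
    have h1 := (h.2.2 x).1
    rw [h0] at h1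
    have hxpos : 0 < ‖x‖ ^ 2 := pow_pos (norm_pos_iff.mpr hx) 2
    nlinarith [h.1]

/-- The frame inequalities, in `ℝ≥0∞` form. -/
lemma IsFrameWith.ennreal_bounds {ι X : Type*} [NormedAddCommGroup X] [InnerProductSpace ℝ X]
    {A B : ℝ} {f : ι → X} (h : IsFrameWith A B f) (x : X) :
    ENNReal.ofReal A * ENNReal.ofReal (‖x‖ ^ 2) ≤ (∑' i, ENNReal.ofReal (⟪x, f i⟫ ^ 2)) ∧
      (∑' i, ENNReal.ofReal (⟪x, f i⟫ ^ 2)) ≤ ENNReal.ofReal B * ENNReal.ofReal (‖x‖ ^ 2) := by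
  have hsum := h.summable x
  have heq : (∑' i, ENNReal.ofReal (⟪x, f i⟫ ^ 2))
      = ENNReal.ofReal (∑' i, ⟪x, f i⟫ ^ 2) :=
    (ENNReal.ofReal_tsum_of_nonneg (fun i => sq_nonneg _) hsum).symm
  have hA : (0 : ℝ) ≤ A := h.1.le
  have hB : (0 : ℝ) ≤ B := hA.trans h.2.1
  constructor
  · rw [heq, ← ENNReal.ofReal_mul hA]
    exact ENNReal.ofReal_le_ofReal (h.2.2 x).1
  · rw [heq, ← ENNReal.ofReal_mul hB]
    exact ENNReal.ofReal_le_ofReal (h.2.2 x).2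

/-- Parseval's identity in `ℝ≥0∞` form. -/
lemma parseval_ennreal {ι X : Type*} [NormedAddCommGroup X] [InnerProductSpace ℝ X]
    [CompleteSpace X] (b : HilbertBasis ι ℝ X) (x : X) :
    (∑' i, ENNReal.ofReal (⟪x, b i⟫ ^ 2)) = ENNReal.ofReal (‖x‖ ^ 2) := by
  have hsum : HasSum (fun i => ⟪x, b i⟫ ^ 2) (‖x‖ ^ 2) := by
    have h := b.hasSum_inner_mul_inner x x
    have h1 : (fun i => ⟪x, b i⟫ * ⟪b i, x⟫) = fun i => ⟪x, b i⟫ ^ 2 := by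
      funext i; rw [real_inner_comm (b i) x, sq]
    rw [h1, real_inner_self_eq_norm_sq] at h
    exact h
  rw [← hsum.tsum_eq, ← ENNReal.ofReal_tsum_of_nonneg (fun i => sq_nonneg _) hsum.summable]

set_option maxHeartbeats 1000000 in
/-- if `{pᵢ}` is a frame for `H` with bounds `A, B` and `{qⱼ}` is a
frame for `K` with bounds `C, D`, then `{pᵢ ⊗ qⱼ}` is a frame for `H ⊗ K` with
bounds `AC` and `BD`. -/
theorem tensor_frame_bounds {H K E : Type*}
    [NormedAddCommGroup H] [InnerProductSpace ℝ H] [CompleteSpace H]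
    [NormedAddCommGroup K] [InnerProductSpace ℝ K] [CompleteSpace K]
    [NormedAddCommGroup E] [InnerProductSpace ℝ E] [CompleteSpace E]
    (tmul : H →L[ℝ] K →L[ℝ] E) (htp : IsHilbertTensorProduct tmul)
    (p_ : ℕ → H) (q_ : ℕ → K) (A B C D : ℝ)
    (hpf : IsFrameWith A B p_) (hqf : IsFrameWith C D q_) :
    IsFrameWith (A * C) (B * D) (fun ij : ℕ × ℕ => tmul (p_ ij.1) (q_ ij.2)) := by
  classical
  obtain ⟨hinner, hdense⟩ := htp
  have hA : (0 : ℝ) < A := hpf.1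
  have hC : (0 : ℝ) < C := hqf.1
  have hB : (0 : ℝ) ≤ B := hA.le.trans hpf.2.1
  have hD : (0 : ℝ) ≤ D := hC.le.trans hqf.2.1
  refine ⟨mul_pos hA hC, mul_le_mul hpf.2.1 hqf.2.1 hC.le hB, ?_⟩
  intro x
  -- Hilbert bases of `H` and `K`
  obtain ⟨wH, bH, -⟩ := exists_hilbertBasis ℝ H
  obtain ⟨wK, bK, -⟩ := exists_hilbertBasis ℝ K
  -- the tensor family is orthonormal
  set g : wH × wK → E := fun kj => tmul (bH kj.1) (bK kj.2) with hg
  have horth : Orthonormal ℝ g := by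
    rw [orthonormal_iff_ite]
    intro i j
    have h1 := (orthonormal_iff_ite.mp bH.orthonormal) i.1 j.1
    have h2 := (orthonormal_iff_ite.mp bK.orthonormal) i.2 j.2
    have : ⟪g i, g j⟫ = ⟪bH i.1, bH j.1⟫ * ⟪bK i.2, bK j.2⟫ := hinner _ _ _ _
    rw [this, h1, h2]
    by_cases e1 : i.1 = j.1 <;> by_cases e2 : i.2 = j.2 <;> simp [Prod.ext_iff, e1, e2]
  -- the tensor family spans a dense subspace
  set M := (Submodule.span ℝ (Set.range g)).topologicalClosure with hM
  have hMclosed : IsClosed (M : Set E) := Submodule.isClosed_topologicalClosure _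
  have step1 : ∀ (k : wH) (q : K), tmul (bH k) q ∈ M := by
    intro k q
    have hq : q ∈ closure ((Submodule.span ℝ (Set.range ⇑bK) : Submodule ℝ K) : Set K) := by
      have : q ∈ (Submodule.span ℝ (Set.range ⇑bK)).topologicalClosure := by
        rw [bK.dense_span]; exact Submodule.mem_top
      exact this
    have hsub : ((Submodule.span ℝ (Set.range ⇑bK) : Submodule ℝ K) : Set K)
        ⊆ (fun q => tmul (bH k) q) ⁻¹' (M : Set E) := by
      intro q hq
      induction hq using Submodule.span_induction with
      | mem y hy =>
          obtain ⟨j, rfl⟩ := hy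
          exact Submodule.le_topologicalClosure _ (Submodule.subset_span ⟨(k, j), rfl⟩)
      | zero => simpa using M.zero_mem
      | add a b _ _ ha hb => simpa [map_add] using M.add_mem ha hb
      | smul c a _ ha => simpa [map_smul] using M.smul_mem c ha
    exact closure_minimal hsub (hMclosed.preimage (tmul (bH k)).continuous) hq
  have step2 : ∀ (q : K) (p : H), tmul p q ∈ M := by
    intro q p
    have hp : p ∈ closure ((Submodule.span ℝ (Set.range ⇑bH) : Submodule ℝ H) : Set H) := by
      have : p ∈ (Submodule.span ℝ (Set.range ⇑bH)).topologicalClosure := by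
        rw [bH.dense_span]; exact Submodule.mem_top
      exact this
    have hsub : ((Submodule.span ℝ (Set.range ⇑bH) : Submodule ℝ H) : Set H)
        ⊆ (fun p => tmul p q) ⁻¹' (M : Set E) := by
      intro p hp
      induction hp using Submodule.span_induction with
      | mem y hy =>
          obtain ⟨k, rfl⟩ := hy
          exact step1 k q
      | zero => simpa using M.zero_mem
      | add a b _ _ ha hb => simpa [map_add] using M.add_mem ha hb
      | smul c a _ ha => simpa [map_smul] using M.smul_mem c ha
    have hcont : Continuous (fun p : H => tmul p q) := (tmul.flip q).continuous
    exact closure_minimal hsub (hMclosed.preimage hcont) hp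
  have hspan : ⊤ ≤ (Submodule.span ℝ (Set.range g)).topologicalClosure := by
    intro x _
    have helem : ((Submodule.span ℝ (Set.range fun z : H × K => tmul z.1 z.2) : Submodule ℝ E) :
        Set E) ⊆ (M : Set E) := by
      have : Submodule.span ℝ (Set.range fun z : H × K => tmul z.1 z.2) ≤ M := by
        rw [Submodule.span_le]
        rintro _ ⟨z, rfl⟩
        exact step2 z.2 z.1
      exact this
    exact closure_minimal helem hMclosed (hdense x)
  let bE : HilbertBasis (wH × wK) ℝ E := HilbertBasis.mk horth hspan
  have hbE : ⇑bE = g := HilbertBasis.coe_mk horth hspan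
  -- Riesz representatives
  let y : ℕ → K := fun i =>
    (InnerProductSpace.toDual ℝ K).symm ((innerSL ℝ x).comp (tmul (p_ i)))
  have hy : ∀ (i : ℕ) (q : K), ⟪y i, q⟫ = ⟪x, tmul (p_ i) q⟫ := fun i q =>
    InnerProductSpace.toDual_symm_apply
  let z : wK → H := fun j =>
    (InnerProductSpace.toDual ℝ H).symm ((innerSL ℝ x).comp (tmul.flip (bK j)))
  have hz : ∀ (j : wK) (p : H), ⟪z j, p⟫ = ⟪x, tmul p (bK j)⟫ := fun j p =>
    InnerProductSpace.toDual_symm_apply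
  -- the main computation, in ℝ≥0∞
  set T : ℝ≥0∞ := ∑' ij : ℕ × ℕ, ENNReal.ofReal (⟪x, tmul (p_ ij.1) (q_ ij.2)⟫ ^ 2) with hT
  set S1 : ℝ≥0∞ := ∑' i : ℕ, ENNReal.ofReal (‖y i‖ ^ 2) with hS1
  set S2 : ℝ≥0∞ := ∑' j : wK, ENNReal.ofReal (‖z j‖ ^ 2) with hS2
  have hT1 : T = ∑' (i : ℕ) (j : ℕ), ENNReal.ofReal (⟪y i, q_ j⟫ ^ 2) := by
    rw [hT, ENNReal.tsum_prod']
    congr 1; funext i; congr 1; funext j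
    rw [hy]
  have hT_lo : ENNReal.ofReal C * S1 ≤ T := by
    rw [hT1, hS1, ← ENNReal.tsum_mul_left]
    exact ENNReal.tsum_le_tsum fun i => (hqf.ennreal_bounds (y i)).1
  have hT_hi : T ≤ ENNReal.ofReal D * S1 := by
    rw [hT1, hS1, ← ENNReal.tsum_mul_left]
    exact ENNReal.tsum_le_tsum fun i => (hqf.ennreal_bounds (y i)).2
  have hS1eq : S1 = ∑' (j : wK) (i : ℕ), ENNReal.ofReal (⟪z j, p_ i⟫ ^ 2) := by
    rw [hS1, ← ENNReal.tsum_comm]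
    congr 1; funext i
    rw [← parseval_ennreal bK (y i)]
    congr 1; funext j
    rw [hy, ← hz]
  have hS1_lo : ENNReal.ofReal A * S2 ≤ S1 := by
    rw [hS1eq, hS2, ← ENNReal.tsum_mul_left]
    exact ENNReal.tsum_le_tsum fun j => (hpf.ennreal_bounds (z j)).1
  have hS1_hi : S1 ≤ ENNReal.ofReal B * S2 := by
    rw [hS1eq, hS2, ← ENNReal.tsum_mul_left]
    exact ENNReal.tsum_le_tsum fun j => (hpf.ennreal_bounds (z j)).2
  have hS2eq : S2 = ENNReal.ofReal (‖x‖ ^ 2) := by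
    rw [hS2, ← parseval_ennreal bE x, ENNReal.tsum_prod']
    rw [ENNReal.tsum_comm]
    congr 1; funext j
    rw [← parseval_ennreal bH (z j)]
    congr 1; funext k
    rw [hz, hbE]
  -- assemble the ℝ≥0∞ bounds
  have hlo : ENNReal.ofReal (A * C * ‖x‖ ^ 2) ≤ T := by
    calc ENNReal.ofReal (A * C * ‖x‖ ^ 2)
        = ENNReal.ofReal C * (ENNReal.ofReal A * ENNReal.ofReal (‖x‖ ^ 2)) := by
          rw [← ENNReal.ofReal_mul hA.le, ← ENNReal.ofReal_mul hC.le]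
          ring_nf
      _ ≤ ENNReal.ofReal C * S1 := by
          refine mul_le_mul_right ?_ _
          rw [← hS2eq]; exact hS1_lo
      _ ≤ T := hT_lo
  have hhi : T ≤ ENNReal.ofReal (B * D * ‖x‖ ^ 2) := by
    calc T ≤ ENNReal.ofReal D * S1 := hT_hi
      _ ≤ ENNReal.ofReal D * (ENNReal.ofReal B * ENNReal.ofReal (‖x‖ ^ 2)) := by
          refine mul_le_mul_right ?_ _
          rw [← hS2eq]; exact hS1_hi
      _ = ENNReal.ofReal (B * D * ‖x‖ ^ 2) := by
          rw [← ENNReal.ofReal_mul hB, ← ENNReal.ofReal_mul hD]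
          ring_nf
  -- translate back to ℝ
  set F : ℕ × ℕ → ℝ := fun ij => ⟪x, tmul (p_ ij.1) (q_ ij.2)⟫ ^ 2 with hF
  have hFnn : ∀ ij, 0 ≤ F ij := fun ij => sq_nonneg _
  have hTne : T ≠ ⊤ := (hhi.trans_lt ENNReal.ofReal_lt_top).ne
  have hFsum : Summable F := by
    set F' : ℕ × ℕ → NNReal := fun ij => ⟨F ij, hFnn ij⟩ with hF'
    have hcoe : ∀ ij, ENNReal.ofReal (F ij) = ((F' ij : NNReal) : ℝ≥0∞) :=
      fun ij => ENNReal.ofReal_eq_coe_nnreal _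
    have hTne' : (∑' ij : ℕ × ℕ, ((F' ij : NNReal) : ℝ≥0∞)) ≠ ⊤ := by
      rw [← tsum_congr hcoe]
      exact hTne
    have := ENNReal.tsum_coe_ne_top_iff_summable.mp hTne'
    exact NNReal.summable_coe.mpr this
  have hTF : T = ENNReal.ofReal (∑' ij : ℕ × ℕ, F ij) :=
    (ENNReal.ofReal_tsum_of_nonneg hFnn hFsum).symm
  rw [hTF] at hlo hhi
  constructor
  · exact (ENNReal.ofReal_le_ofReal_iff (tsum_nonneg hFnn)).mp hlo
  · exact (ENNReal.ofReal_le_ofReal_iff (by positivity)).mp hhi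
end

section
/- Let {pᵢ} be a frame for H with frame operator S_F and {qⱼ} a frame for K with frame operator S_G. Then the frame operator S of the tensor product frame {pᵢ ⊗ qⱼ}ᵢ,ⱼ for H ⊗ K equals S_F ⊗ S_G, and consequently S⁻¹ = S_F⁻¹ ⊗ S_G⁻¹. -/
open scoped RealInnerProductSpace

/-- the frame operator of the tensor product frame `{pᵢ ⊗ qⱼ}` is
`S_F ⊗ S_G`, and its inverse is `S_F⁻¹ ⊗ S_G⁻¹`. -/
theorem tensor_frame_operator {H K E : Type*}
    [NormedAddCommGroup H] [InnerProductSpace ℝ H] [CompleteSpace H]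
    [NormedAddCommGroup K] [InnerProductSpace ℝ K] [CompleteSpace K]
    [NormedAddCommGroup E] [InnerProductSpace ℝ E] [CompleteSpace E]
    (tmul : H →L[ℝ] K →L[ℝ] E) (htp : IsHilbertTensorProduct tmul)
    (p_ : ℕ → H) (q_ : ℕ → K) (A B C D : ℝ)
    (hpf : IsFrameWith A B p_) (hqf : IsFrameWith C D q_)
    (SF : H →L[ℝ] H) (hSF : ∀ x : H, HasSum (fun i : ℕ => ⟪x, p_ i⟫ • p_ i) (SF x))
    (SG : K →L[ℝ] K) (hSG : ∀ y : K, HasSum (fun j : ℕ => ⟪y, q_ j⟫ • q_ j) (SG y))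
    (S : E →L[ℝ] E)
    (hS : ∀ u : E, HasSum
      (fun ij : ℕ × ℕ => ⟪u, tmul (p_ ij.1) (q_ ij.2)⟫ • tmul (p_ ij.1) (q_ ij.2)) (S u))
    (SFG : E →L[ℝ] E)
    (hSFG : ∀ (f : H) (g : K), SFG (tmul f g) = tmul (SF f) (SG g)) :
    S = SFG ∧
    ∀ (SFinv : H →L[ℝ] H) (SGinv : K →L[ℝ] K) (W : E →L[ℝ] E),
      SF.comp SFinv = ContinuousLinearMap.id ℝ H →
      SFinv.comp SF = ContinuousLinearMap.id ℝ H →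
      SG.comp SGinv = ContinuousLinearMap.id ℝ K →
      SGinv.comp SG = ContinuousLinearMap.id ℝ K →
      (∀ (f : H) (g : K), W (tmul f g) = tmul (SFinv f) (SGinv g)) →
      S.comp W = ContinuousLinearMap.id ℝ E ∧ W.comp S = ContinuousLinearMap.id ℝ E := by
  classical
  have key : ∀ (f : H) (g : K), S (tmul f g) = tmul (SF f) (SG g) := by
    intro f g
    have h1 : HasSum (fun ij : ℕ × ℕ =>
        (⟪f, p_ ij.1⟫ * ⟪g, q_ ij.2⟫) • tmul (p_ ij.1) (q_ ij.2)) (S (tmul f g)) := by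
      simpa [htp.1] using hS (tmul f g)
    have h2 : ∀ i : ℕ, HasSum (fun j : ℕ =>
        (⟪f, p_ i⟫ * ⟪g, q_ j⟫) • tmul (p_ i) (q_ j))
        (⟪f, p_ i⟫ • tmul (p_ i) (SG g)) := by
      intro i
      have := ((hSG g).mapL (tmul (p_ i))).const_smul ⟪f, p_ i⟫
      simpa [mul_smul, map_smul] using this
    have h3 : HasSum (fun i : ℕ => ⟪f, p_ i⟫ • tmul (p_ i) (SG g)) (S (tmul f g)) :=
      h1.prod_fiberwise h2
    have h4 : HasSum (fun i : ℕ => ⟪f, p_ i⟫ • tmul (p_ i) (SG g))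
        (tmul (SF f) (SG g)) := by
      have := (hSF f).mapL (tmul.flip (SG g))
      simpa [map_smul] using this
    exact h3.unique h4
  have hseq : S = SFG := by
    refine ContinuousLinearMap.ext_on htp.2 ?_
    rintro _ ⟨z, rfl⟩
    simp [key, hSFG]
  refine ⟨hseq, ?_⟩
  intro SFinv SGinv W h1 h2 h3 h4 hW
  constructor
  · refine ContinuousLinearMap.ext_on htp.2 ?_
    rintro _ ⟨z, rfl⟩
    simp only [ContinuousLinearMap.comp_apply, ContinuousLinearMap.id_apply, hW, key]
    have e1 : SF (SFinv z.1) = z.1 := DFunLike.congr_fun h1 z.1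
    have e2 : SG (SGinv z.2) = z.2 := DFunLike.congr_fun h3 z.2
    rw [e1, e2]
  · refine ContinuousLinearMap.ext_on htp.2 ?_
    rintro _ ⟨z, rfl⟩
    simp only [ContinuousLinearMap.comp_apply, ContinuousLinearMap.id_apply, key, hW]
    have e1 : SFinv (SF z.1) = z.1 := DFunLike.congr_fun h2 z.1
    have e2 : SGinv (SG z.2) = z.2 := DFunLike.congr_fun h4 z.2
    rw [e1, e2]
end

section
/- Let {pᵢ}, {eᵢ} be a pair of dual frames for a Hilbert space H and {qⱼ}, {hⱼ} a pair of dual frames for a Hilbert space K. Then {eᵢ ⊗ hⱼ}ᵢ,ⱼ is a dual frame of {pᵢ ⊗ qⱼ}ᵢ,ⱼ for the Hilbert space tensor product H ⊗ K; that is, u = Σᵢ,ⱼ ⟨u, eᵢ ⊗ hⱼ⟩ (pᵢ ⊗ qⱼ) for all u ∈ H ⊗ K. -/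
open scoped RealInnerProductSpace

/-!
Fix Hilbert bases `(bₐ)` of `H` and `(cₖ)` of `K`; the tensors `bₐ ⊗ cₖ` form a Hilbert basis of
`E`. For `u ∈ E` the partial adjoints `wᵢ = (fᵢ ⊗ ·)† u ∈ K` satisfy `⟨u, fᵢ ⊗ gⱼ⟩ = ⟨wᵢ, gⱼ⟩`, so
summing the frame inequalities of `(gⱼ)` over `i` bounds `Σᵢⱼ ⟨u, fᵢ ⊗ gⱼ⟩²` by `Σᵢ ‖wᵢ‖²`, which
the same slicing (now against `(cₖ)` and the frame `(fᵢ)`) compares with `‖u‖²`.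

Both tensor families are therefore Bessel, so `u ↦ Σᵢⱼ ⟨u, eᵢ ⊗ hⱼ⟩ pᵢ ⊗ qⱼ` is a bounded operator.
On an elementary tensor `x ⊗ y` its series is the product of the reconstructions of `x` and `y`,
so it is the identity on a set with dense span.
-/

open scoped InnerProduct

section Frames

variable {ι κ X Y : Type*} [NormedAddCommGroup X] [InnerProductSpace ℝ X]
  [NormedAddCommGroup Y] [InnerProductSpace ℝ Y]

/-- Bessel bound through finite partial sums, so that no summability has to be assumed. -/
def IsBesselWith (B : ℝ) (v : ι → X) : Prop :=
  ∀ (x : X) (s : Finset ι), ∑ i ∈ s, ⟪x, v i⟫ ^ 2 ≤ B * ‖x‖ ^ 2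

theorem IsFrameWith.summable_inner_sq {A B : ℝ} {f : ι → X} (hf : IsFrameWith A B f) (x : X) :
    Summable fun i => ⟪x, f i⟫ ^ 2 := by
  obtain ⟨hA, -, hbounds⟩ := hf
  by_contra hs
  have hlow : A * ‖x‖ ^ 2 ≤ 0 := by
    simpa only [tsum_eq_zero_of_not_summable hs] using (hbounds x).1
  have hx : x = 0 := by simpa using nonpos_of_mul_nonpos_right hlow hA
  exact hs (by simp [hx])

theorem IsFrameWith.isBesselWith {A B : ℝ} {f : ι → X} (hf : IsFrameWith A B f) :
    IsBesselWith B f := fun x s =>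
  ((hf.summable_inner_sq x).sum_le_tsum s fun _ _ => sq_nonneg _).trans (hf.2.2 x).2

namespace IsBesselWith

variable {B : ℝ} {v : ι → X}

theorem summable_inner_sq (hv : IsBesselWith B v) (x : X) : Summable fun i => ⟪x, v i⟫ ^ 2 :=
  summable_of_sum_le (fun _ => sq_nonneg _) (hv x)

theorem tsum_inner_sq_le (hv : IsBesselWith B v) (x : X) :
    ∑' i, ⟪x, v i⟫ ^ 2 ≤ B * ‖x‖ ^ 2 :=
  Real.tsum_le_of_sum_le (fun _ => sq_nonneg _) (hv x)

theorem norm_sum_smul_sq_le (hv : IsBesselWith B v) (hB : 0 ≤ B) (c : ι → ℝ) (s : Finset ι) :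
    ‖∑ i ∈ s, c i • v i‖ ^ 2 ≤ B * ∑ i ∈ s, c i ^ 2 := by
  set w := ∑ i ∈ s, c i • v i with hw_def
  have hw : ‖w‖ ^ 2 = ∑ i ∈ s, c i * ⟪w, v i⟫ := by
    rw [← real_inner_self_eq_norm_sq]
    nth_rewrite 2 [hw_def]
    simp only [inner_sum, real_inner_smul_right]
  have hcs : (‖w‖ ^ 2) ^ 2 ≤ (∑ i ∈ s, c i ^ 2) * (B * ‖w‖ ^ 2) :=
    calc (‖w‖ ^ 2) ^ 2 = (∑ i ∈ s, c i * ⟪w, v i⟫) ^ 2 := by rw [hw]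
      _ ≤ (∑ i ∈ s, c i ^ 2) * ∑ i ∈ s, ⟪w, v i⟫ ^ 2 := Finset.sum_mul_sq_le_sq_mul_sq s _ _
      _ ≤ (∑ i ∈ s, c i ^ 2) * (B * ‖w‖ ^ 2) :=
        mul_le_mul_of_nonneg_left (hv w s) (Finset.sum_nonneg fun i _ => sq_nonneg (c i))
  rcases (sq_nonneg ‖w‖).eq_or_lt with h | h
  · rw [← h]
    exact mul_nonneg hB (Finset.sum_nonneg fun i _ => sq_nonneg (c i))
  · nlinarith

theorem summable_smul [CompleteSpace X] (hv : IsBesselWith B v) (hB : 0 ≤ B) {c : ι → ℝ}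
    (hc : Summable fun i => c i ^ 2) : Summable fun i => c i • v i := by
  rw [summable_iff_vanishing_norm]
  intro ε hε
  obtain ⟨s, hs⟩ := summable_iff_vanishing_norm.1 hc (ε ^ 2 / (B + 1)) (by positivity)
  refine ⟨s, fun t ht => ?_⟩
  have hc0 : 0 ≤ ∑ i ∈ t, c i ^ 2 := Finset.sum_nonneg fun i _ => sq_nonneg (c i)
  have htail := hs t ht
  rw [Real.norm_of_nonneg hc0] at htail
  have hsq : ‖∑ i ∈ t, c i • v i‖ ^ 2 < ε ^ 2 :=
    calc ‖∑ i ∈ t, c i • v i‖ ^ 2 ≤ B * ∑ i ∈ t, c i ^ 2 := hv.norm_sum_smul_sq_le hB c t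
      _ ≤ (B + 1) * ∑ i ∈ t, c i ^ 2 := by nlinarith
      _ < (B + 1) * (ε ^ 2 / (B + 1)) := by gcongr
      _ = ε ^ 2 := by field_simp
  exact lt_of_pow_lt_pow_left₀ 2 hε.le hsq

theorem norm_tsum_smul_sq_le [CompleteSpace X] (hv : IsBesselWith B v) (hB : 0 ≤ B)
    {c : ι → ℝ} (hc : Summable fun i => c i ^ 2) :
    ‖∑' i, c i • v i‖ ^ 2 ≤ B * ∑' i, c i ^ 2 := by
  have hlim := ((continuous_norm.pow 2).tendsto _).comp (hv.summable_smul hB hc).hasSum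
  refine le_of_tendsto' hlim fun s => (hv.norm_sum_smul_sq_le hB c s).trans ?_
  exact mul_le_mul_of_nonneg_left (hc.sum_le_tsum s fun _ _ => sq_nonneg _) hB

theorem exists_clm_hasSum_inner_smul [CompleteSpace Y] {B' : ℝ} {v : ι → Y} {w : ι → X}
    (hv : IsBesselWith B v) (hB : 0 ≤ B) (hw : IsBesselWith B' w) :
    ∃ S : X →L[ℝ] Y, ∀ u, HasSum (fun i => ⟪u, w i⟫ • v i) (S u) := by
  have hsum (u : X) : Summable fun i => ⟪u, w i⟫ • v i :=
    hv.summable_smul hB (hw.summable_inner_sq u)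
  let S : X →ₗ[ℝ] Y :=
    { toFun := fun u => ∑' i, ⟪u, w i⟫ • v i
      map_add' := fun u u' => by
        simp only [inner_add_left, add_smul]
        exact (hsum u).tsum_add (hsum u')
      map_smul' := fun r u => by
        simp only [real_inner_smul_left, mul_smul, RingHom.id_apply]
        exact (hsum u).tsum_const_smul r }
  refine ⟨S.mkContinuous √(B * B') fun u => ?_, fun u => (hsum u).hasSum⟩
  have hbound : ‖S u‖ ^ 2 ≤ B * B' * ‖u‖ ^ 2 :=
    calc ‖S u‖ ^ 2 ≤ B * ∑' i, ⟪u, w i⟫ ^ 2 := hv.norm_tsum_smul_sq_le hB (hw.summable_inner_sq u)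
      _ ≤ B * (B' * ‖u‖ ^ 2) := mul_le_mul_of_nonneg_left (hw.tsum_inner_sq_le u) hB
      _ = B * B' * ‖u‖ ^ 2 := by ring
  calc ‖S u‖ = √(‖S u‖ ^ 2) := (Real.sqrt_sq (norm_nonneg _)).symm
    _ ≤ √(B * B' * ‖u‖ ^ 2) := Real.sqrt_le_sqrt hbound
    _ = √(B * B') * ‖u‖ := by rw [Real.sqrt_mul' _ (sq_nonneg _), Real.sqrt_sq (norm_nonneg _)]

end IsBesselWith

theorem HasSum.prod_of_nonneg {F : ι × κ → ℝ} (hF : 0 ≤ F) {a : ι → ℝ} {s : ℝ}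
    (hrow : ∀ i, HasSum (fun j => F (i, j)) (a i)) (ha : HasSum a s) : HasSum F s := by
  have hF : Summable F := (summable_prod_of_nonneg hF).2
    ⟨fun i => (hrow i).summable, by simpa only [fun i => (hrow i).tsum_eq] using ha.summable⟩
  rw [ha.unique (hF.hasSum.prod_fiberwise hrow)]
  exact hF.hasSum

theorem IsFrameWith.exists_hasSum_prod_inner_sq {C D : ℝ} {g : κ → X} (hg : IsFrameWith C D g)
    {w : ι → X} {s : ℝ} (hw : HasSum (fun i => ‖w i‖ ^ 2) s) :
    ∃ t, HasSum (fun z : ι × κ => ⟪w z.1, g z.2⟫ ^ 2) t ∧ C * s ≤ t ∧ t ≤ D * s := by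
  have hr : Summable fun i => ∑' j, ⟪w i, g j⟫ ^ 2 :=
    (hw.summable.mul_left D).of_nonneg_of_le (fun i => tsum_nonneg fun j => sq_nonneg _)
      fun i => (hg.2.2 (w i)).2
  refine ⟨_, HasSum.prod_of_nonneg (fun _ => sq_nonneg _)
      (fun i => (hg.summable_inner_sq (w i)).hasSum) hr.hasSum, ?_, ?_⟩
  · exact hasSum_le (fun i => (hg.2.2 (w i)).1) (hw.mul_left C) hr.hasSum
  · exact hasSum_le (fun i => (hg.2.2 (w i)).2) hr.hasSum (hw.mul_left D)

theorem HilbertBasis.hasSum_inner_sq (b : HilbertBasis ι ℝ X) (x : X) :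
    HasSum (fun i => ⟪x, b i⟫ ^ 2) (‖x‖ ^ 2) := by
  simpa only [real_inner_comm x, ← sq, real_inner_self_eq_norm_sq] using
    b.hasSum_inner_mul_inner x x

end Frames

theorem HilbertBasis.submodule_eq_top_of_isClosed {ι 𝕜 V : Type*} [RCLike 𝕜]
    [NormedAddCommGroup V] [InnerProductSpace 𝕜 V] (b : HilbertBasis ι 𝕜 V)
    {N : Submodule 𝕜 V} (hN : IsClosed (N : Set V)) (hb : ∀ i, b i ∈ N) : N = ⊤ :=
  top_unique <| b.dense_span ▸ (Submodule.span 𝕜 _).topologicalClosure_minimal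
    (Submodule.span_le.2 (Set.range_subset_iff.2 hb)) hN

theorem HasSum.mapL₂ {ι κ 𝕜 M N P : Type*} [NontriviallyNormedField 𝕜]
    [NormedAddCommGroup M] [NormedSpace 𝕜 M] [NormedAddCommGroup N] [NormedSpace 𝕜 N]
    [NormedAddCommGroup P] [NormedSpace 𝕜 P] (L : M →L[𝕜] N →L[𝕜] P) {f : ι → M} {g : κ → N}
    {x : M} {y : N} (hf : HasSum f x) (hg : HasSum g y)
    (hfg : Summable fun z : ι × κ => L (f z.1) (g z.2)) :
    HasSum (fun z : ι × κ => L (f z.1) (g z.2)) (L x y) := by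
  obtain ⟨S, hS⟩ := hfg
  have hxy : L x y = S := (hf.mapL (L.flip y)).unique (hS.prod_fiberwise fun i => hg.mapL (L (f i)))
  rwa [hxy]

namespace IsHilbertTensorProduct

variable {ι κ H K E : Type*} [NormedAddCommGroup H] [InnerProductSpace ℝ H]
  [NormedAddCommGroup K] [InnerProductSpace ℝ K] [NormedAddCommGroup E] [InnerProductSpace ℝ E]
  {tmul : H →L[ℝ] K →L[ℝ] E}

theorem flip (htp : IsHilbertTensorProduct tmul) : IsHilbertTensorProduct tmul.flip := by
  refine ⟨fun q q' p p' => by simp only [ContinuousLinearMap.flip_apply, htp.1, mul_comm], ?_⟩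
  have hrange : Set.range (fun z : K × H => tmul.flip z.1 z.2) =
      Set.range (fun z : H × K => tmul z.1 z.2) := by
    ext u
    constructor <;> rintro ⟨⟨a, b⟩, rfl⟩ <;> exact ⟨(b, a), rfl⟩
  rw [hrange]
  exact htp.2

theorem orthonormal_tensor (htp : IsHilbertTensorProduct tmul) {b : ι → H} {c : κ → K}
    (hb : Orthonormal ℝ b) (hc : Orthonormal ℝ c) :
    Orthonormal ℝ fun z : ι × κ => tmul (b z.1) (c z.2) := by
  classical
  rw [orthonormal_iff_ite] at hb hc ⊢
  intro z z'
  rw [htp.1, hb, hc]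
  by_cases h1 : z.1 = z'.1 <;> by_cases h2 : z.2 = z'.2 <;> simp [h1, h2, Prod.ext_iff]

theorem topologicalClosure_span_tensor_eq_top (htp : IsHilbertTensorProduct tmul)
    (b : HilbertBasis ι ℝ H) (c : HilbertBasis κ ℝ K) :
    (Submodule.span ℝ (Set.range fun z : ι × κ => tmul (b z.1) (c z.2))).topologicalClosure =
      ⊤ := by
  set M := (Submodule.span ℝ (Set.range fun z : ι × κ => tmul (b z.1) (c z.2))).topologicalClosure
  have hM : IsClosed (M : Set E) := Submodule.isClosed_topologicalClosure _
  have hbc (i : ι) (k : κ) : tmul (b i) (c k) ∈ M :=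
    Submodule.le_topologicalClosure _ (Submodule.subset_span ⟨(i, k), rfl⟩)
  have hxc (x : H) (k : κ) : tmul x (c k) ∈ M := by
    have := b.submodule_eq_top_of_isClosed (N := M.comap (tmul.flip (c k)).toLinearMap)
      (hM.preimage (tmul.flip (c k)).continuous) fun i => hbc i k
    exact Submodule.eq_top_iff'.1 this x
  have hxy (x : H) (y : K) : tmul x y ∈ M := by
    have := c.submodule_eq_top_of_isClosed (N := M.comap (tmul x).toLinearMap)
      (hM.preimage (tmul x).continuous) (hxc x)
    exact Submodule.eq_top_iff'.1 this y
  refine top_unique ?_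
  rw [← Submodule.dense_iff_topologicalClosure_eq_top.1 htp.2]
  exact Submodule.topologicalClosure_minimal _
    (Submodule.span_le.2 (Set.range_subset_iff.2 fun z => hxy z.1 z.2)) hM

variable [CompleteSpace E]

theorem hasSum_inner_tensor_sq (htp : IsHilbertTensorProduct tmul)
    (b : HilbertBasis ι ℝ H) (c : HilbertBasis κ ℝ K) (u : E) :
    HasSum (fun z : ι × κ => ⟪u, tmul (b z.1) (c z.2)⟫ ^ 2) (‖u‖ ^ 2) := by
  have hon := htp.orthonormal_tensor b.orthonormal c.orthonormal
  have hsp := (htp.topologicalClosure_span_tensor_eq_top b c).ge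
  simpa only [HilbertBasis.coe_mk] using (HilbertBasis.mk hon hsp).hasSum_inner_sq u

theorem hasSum_norm_adjoint_sq [CompleteSpace K] (htp : IsHilbertTensorProduct tmul)
    (b : HilbertBasis ι ℝ H) (u : E) : HasSum (fun i => ‖((tmul (b i))†) u‖ ^ 2) (‖u‖ ^ 2) := by
  obtain ⟨_, c, -⟩ := exists_hilbertBasis ℝ K
  refine (htp.hasSum_inner_tensor_sq b c u).prod_fiberwise fun i => ?_
  simpa only [ContinuousLinearMap.adjoint_inner_left] using c.hasSum_inner_sq (((tmul (b i))†) u)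

theorem exists_hasSum_norm_adjoint_sq [CompleteSpace H] [CompleteSpace K]
    (htp : IsHilbertTensorProduct tmul) {A B : ℝ} {f : ι → H} (hf : IsFrameWith A B f) (u : E) :
    ∃ s, HasSum (fun i => ‖((tmul (f i))†) u‖ ^ 2) s ∧ A * ‖u‖ ^ 2 ≤ s ∧ s ≤ B * ‖u‖ ^ 2 := by
  obtain ⟨_, c, -⟩ := exists_hilbertBasis ℝ K
  obtain ⟨t, ht, hAt, htB⟩ := hf.exists_hasSum_prod_inner_sq (htp.flip.hasSum_norm_adjoint_sq c u)
  rw [← (Equiv.prodComm _ _).hasSum_iff] at ht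
  refine ⟨t, ht.prod_fiberwise fun i => ?_, hAt, htB⟩
  simpa only [Function.comp_apply, Equiv.prodComm_apply, Prod.swap_prod_mk,
    ContinuousLinearMap.adjoint_inner_left, ContinuousLinearMap.flip_apply] using
    c.hasSum_inner_sq (((tmul (f i))†) u)

theorem isFrameWith_tensor [CompleteSpace H] [CompleteSpace K]
    (htp : IsHilbertTensorProduct tmul) {A B C D : ℝ} {f : ι → H} {g : κ → K}
    (hf : IsFrameWith A B f) (hg : IsFrameWith C D g) :
    IsFrameWith (A * C) (B * D) fun z : ι × κ => tmul (f z.1) (g z.2) := by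
  refine ⟨mul_pos hf.1 hg.1, mul_le_mul hf.2.1 hg.2.1 hg.1.le (hf.1.le.trans hf.2.1), fun u => ?_⟩
  obtain ⟨s, hs, hAs, hsB⟩ := htp.exists_hasSum_norm_adjoint_sq hf u
  obtain ⟨t, ht, hCt, htD⟩ := hg.exists_hasSum_prod_inner_sq hs
  simp only [ContinuousLinearMap.adjoint_inner_left] at ht
  rw [ht.tsum_eq]
  constructor
  · calc A * C * ‖u‖ ^ 2 = C * (A * ‖u‖ ^ 2) := by ring
      _ ≤ C * s := mul_le_mul_of_nonneg_left hAs hg.1.le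
      _ ≤ t := hCt
  · calc t ≤ D * s := htD
      _ ≤ D * (B * ‖u‖ ^ 2) := mul_le_mul_of_nonneg_left hsB (hg.1.le.trans hg.2.1)
      _ = B * D * ‖u‖ ^ 2 := by ring

theorem hasSum_inner_smul_tensor (htp : IsHilbertTensorProduct tmul) {p e : ι → H}
    {q h : κ → K} {B B' : ℝ} (hpq : IsBesselWith B fun z : ι × κ => tmul (p z.1) (q z.2))
    (hB : 0 ≤ B) (heh : IsBesselWith B' fun z : ι × κ => tmul (e z.1) (h z.2))
    (hdualH : ∀ x : H, HasSum (fun i => ⟪x, e i⟫ • p i) x)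
    (hdualK : ∀ y : K, HasSum (fun j => ⟪y, h j⟫ • q j) y) (u : E) :
    HasSum (fun z : ι × κ => ⟪u, tmul (e z.1) (h z.2)⟫ • tmul (p z.1) (q z.2)) u := by
  obtain ⟨S, hS⟩ := hpq.exists_clm_hasSum_inner_smul hB heh
  suffices hSid : S = ContinuousLinearMap.id ℝ E by simpa [hSid] using hS u
  refine ContinuousLinearMap.ext_on htp.2 ?_
  rintro _ ⟨⟨x, y⟩, rfl⟩
  change S (tmul x y) = tmul x y
  have hterm (z : ι × κ) : ⟪tmul x y, tmul (e z.1) (h z.2)⟫ • tmul (p z.1) (q z.2) =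
      tmul (⟪x, e z.1⟫ • p z.1) (⟪y, h z.2⟫ • q z.2) := by
    rw [htp.1, map_smul, map_smul, smul_apply, smul_smul, mul_comm]
  have hxy := hS (tmul x y)
  simp only [hterm] at hxy
  have hprod := (hdualH x).mapL₂ tmul (hdualK y) hxy.summable
  exact hxy.unique hprod

end IsHilbertTensorProduct

/-- tensor products of pairs of dual frames are dual frames:
`u = Σᵢⱼ ⟨u, eᵢ ⊗ hⱼ⟩ (pᵢ ⊗ qⱼ)` for all `u ∈ H ⊗ K`, and both tensor families
are frames for `H ⊗ K`. -/
theorem tensor_dual_frames {H K E : Type*}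
    [NormedAddCommGroup H] [InnerProductSpace ℝ H] [CompleteSpace H]
    [NormedAddCommGroup K] [InnerProductSpace ℝ K] [CompleteSpace K]
    [NormedAddCommGroup E] [InnerProductSpace ℝ E] [CompleteSpace E]
    (tmul : H →L[ℝ] K →L[ℝ] E) (htp : IsHilbertTensorProduct tmul)
    (p_ e_ : ℕ → H) (q_ h_ : ℕ → K) (A B A' B' C D C' D' : ℝ)
    (hpf : IsFrameWith A B p_) (hef : IsFrameWith A' B' e_)
    (hqf : IsFrameWith C D q_) (hhf : IsFrameWith C' D' h_)
    (hdualH : ∀ x : H, HasSum (fun i : ℕ => ⟪x, e_ i⟫ • p_ i) x)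
    (hdualK : ∀ y : K, HasSum (fun j : ℕ => ⟪y, h_ j⟫ • q_ j) y) :
    (∃ A₀ B₀ : ℝ, IsFrameWith A₀ B₀ (fun ij : ℕ × ℕ => tmul (p_ ij.1) (q_ ij.2))) ∧
    (∃ A₁ B₁ : ℝ, IsFrameWith A₁ B₁ (fun ij : ℕ × ℕ => tmul (e_ ij.1) (h_ ij.2))) ∧
    ∀ u : E, HasSum
      (fun ij : ℕ × ℕ => ⟪u, tmul (e_ ij.1) (h_ ij.2)⟫ • tmul (p_ ij.1) (q_ ij.2)) u := by
  have hPQ := htp.isFrameWith_tensor hpf hqf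
  have hEH := htp.isFrameWith_tensor hef hhf
  exact ⟨⟨_, _, hPQ⟩, ⟨_, _, hEH⟩, htp.hasSum_inner_smul_tensor hPQ.isBesselWith
    (hPQ.1.le.trans hPQ.2.1) hEH.isBesselWith hdualH hdualK⟩
end
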